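/- arXiv:2106.11502 — 5 statements merged into one kernel-verified Lean document; each statement's English description precedes it below -/
import Mathlib

section
/- Every positional scoring rule satisfies positive involvement: for any positional scoring rule F determined by a map S assigning to each n a scoring vector of length n, any profile P, and any x ∈ F(P), if P' is obtained from P by adding one new voter whose ballot ranks x in first place, then x ∈ F(P'). -/
open scoped Classical

/-- `r` is a strict linear order on the finite set `X`, relating only members of `X`. -/
def IsLinOn (X : Finset ℕ) (r : ℕ → ℕ → Prop) : Prop :=
  (∀ a b, r a b → a ∈ X ∧ b ∈ X) ∧
  (∀ a, ¬ r a a) ∧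
  (∀ a b c, r a b → r b c → r a c) ∧
  (∀ a ∈ X, ∀ b ∈ X, a ≠ b → r a b ∨ r b a)

/-- A profile assigns to each voter in a nonempty finite set of voters a strict linear
order (ballot) on a nonempty finite set of candidates.  Voters and candidates are both
drawn from the infinite set `ℕ`. -/
structure Profile where
  voters : Finset ℕ
  cands : Finset ℕ
  voters_nonempty : voters.Nonempty
  cands_nonempty : cands.Nonempty
  ballot : ℕ → ℕ → ℕ → Prop
  ballot_lin : ∀ i ∈ voters, IsLinOn cands (ballot i)

/-- `F` is a voting method: it assigns to each profile a nonempty set of winners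
among the candidates of the profile. -/
def VotingMethod (F : Profile → Finset ℕ) : Prop :=
  ∀ P : Profile, (F P).Nonempty ∧ F P ⊆ P.cands

/-- The ballot `r` ranks `x` in first place among the candidates in `X`. -/
def RanksFirst (X : Finset ℕ) (r : ℕ → ℕ → Prop) (x : ℕ) : Prop :=
  x ∈ X ∧ ∀ y ∈ X, y ≠ x → r x y

/-- `P'` is obtained from `P` by adding one new voter `j` whose ballot ranks `x` in
first place. -/
def AddVoter (P P' : Profile) (j x : ℕ) : Prop :=
  P'.cands = P.cands ∧ j ∉ P.voters ∧ P'.voters = insert j P.voters ∧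
  (∀ i ∈ P.voters, ∀ a b, (P'.ballot i a b ↔ P.ballot i a b)) ∧
  RanksFirst P.cands (P'.ballot j) x

/-- `F` satisfies positive involvement (PI). -/
def SatisfiesPI (F : Profile → Finset ℕ) : Prop :=
  ∀ (P P' : Profile) (j x : ℕ), x ∈ F P → AddVoter P P' j x → x ∈ F P'

/-- The rank of `x` in the ballot `r` on the candidate set `X`:
one plus the number of candidates ranked above `x`. -/
noncomputable def rankOf (X : Finset ℕ) (r : ℕ → ℕ → Prop) (x : ℕ) : ℕ :=
  (X.filter (fun b => r b x)).card + 1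

/-- `s` is a scoring vector of length `n`: `s m ≥ s (m+1)` for `m ∈ {1, …, n-1}`. -/
def IsScoringVector (n : ℕ) (s : ℕ → ℝ) : Prop :=
  ∀ m : ℕ, 1 ≤ m → m + 1 ≤ n → s (m + 1) ≤ s m

/-- The total score of candidate `x` in profile `P` under the scoring vector `s`. -/
noncomputable def scoreSum (s : ℕ → ℝ) (P : Profile) (x : ℕ) : ℝ :=
  ∑ i ∈ P.voters, s (rankOf P.cands (P.ballot i) x)

/-- `F` is a positional scoring rule: for some map `S` assigning to each `n` a scoring
vector of length `n`, `F` selects the candidates with maximal total score. -/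
def IsPositionalScoringRule (F : Profile → Finset ℕ) : Prop :=
  ∃ S : ℕ → ℕ → ℝ, (∀ n, IsScoringVector n (S n)) ∧
    ∀ P : Profile,
      F P = P.cands.filter (fun x => ∀ y ∈ P.cands,
        scoreSum (S P.cands.card) P y ≤ scoreSum (S P.cands.card) P x)

lemma score_le_first {n : ℕ} {s : ℕ → ℝ} (hs : IsScoringVector n s) :
    ∀ m : ℕ, 1 ≤ m → m ≤ n → s m ≤ s 1 := by
  intro m
  induction m with
  | zero => omega
  | succ k ih =>
    intro _ hk
    rcases Nat.eq_or_lt_of_le (show 1 ≤ k + 1 from by omega) with h | h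
    · simp [← h]
    · have hk1 : 1 ≤ k := by omega
      have := hs k hk1 hk
      exact le_trans this (ih hk1 (by omega))

/-- Every positional scoring rule satisfies positive involvement. -/
theorem scoring_rules_satisfy_PI :
    ∀ F : Profile → Finset ℕ, IsPositionalScoringRule F → SatisfiesPI F := by
  intro F hF P P' j x hx hadd
  obtain ⟨S, hS, hFdef⟩ := hF
  obtain ⟨hcands, hjnot, hvoters, hsame, hfirst⟩ := hadd
  obtain ⟨hxX, hxtop⟩ := hfirst
  rw [hFdef] at hx
  rw [hFdef]
  rw [Finset.mem_filter] at hx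
  obtain ⟨hxP, hxmax⟩ := hx
  set n := P.cands.card with hn
  -- rankOf is the same for old voters
  have hrank_eq : ∀ i ∈ P.voters, ∀ y,
      rankOf P.cands (P'.ballot i) y = rankOf P.cands (P.ballot i) y := by
    intro i hi y
    unfold rankOf
    congr 1
    apply Finset.card_bij (fun a _ => a) <;> simp_all [hsame]
  -- score in P' = score in P + s (rank in j's ballot)
  have hscore : ∀ y, scoreSum (S n) P' y
      = scoreSum (S n) P y + S n (rankOf P.cands (P'.ballot j) y) := by
    intro y
    unfold scoreSum
    rw [hvoters, Finset.sum_insert hjnot, hcands]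
    rw [add_comm]
    congr 1
    apply Finset.sum_congr rfl
    intro i hi
    rw [hrank_eq i hi y]
  -- rank of x in j's ballot is 1
  have hlinj : IsLinOn P.cands (P'.ballot j) := by
    have := P'.ballot_lin j (by rw [hvoters]; exact Finset.mem_insert_self _ _)
    rwa [hcands] at this
  obtain ⟨hmem, hirr, htrans, htot⟩ := hlinj
  have hrankx : rankOf P.cands (P'.ballot j) x = 1 := by
    unfold rankOf
    have : P.cands.filter (fun b => P'.ballot j b x) = ∅ := by
      apply Finset.filter_eq_empty_iff.mpr
      intro b hb hbx
      by_cases hbx' : b = x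
      · exact hirr x (hbx' ▸ hbx)
      · exact hirr b (htrans b x b hbx (hxtop b hb hbx'))
    simp [this]
  -- rank bounds for any y ∈ P.cands
  have hrank_le : ∀ y ∈ P.cands, rankOf P.cands (P'.ballot j) y ≤ n := by
    intro y hy
    unfold rankOf
    have hsub : P.cands.filter (fun b => P'.ballot j b y) ⊆ P.cands.erase y := by
      intro b hb
      rw [Finset.mem_filter] at hb
      refine Finset.mem_erase.mpr ⟨?_, hb.1⟩
      intro h; exact hirr y (h ▸ hb.2)
    have := Finset.card_le_card hsub
    rw [Finset.card_erase_of_mem hy] at this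
    have hpos : 1 ≤ n := Finset.card_pos.mpr P.cands_nonempty
    omega
  -- conclude
  rw [Finset.mem_filter]
  rw [hcands, ← hn]
  refine ⟨hxX, ?_⟩
  intro y hy
  rw [hscore y, hscore x, hrankx]
  have h1 : scoreSum (S n) P y ≤ scoreSum (S n) P x := hxmax y hy
  have h2 : S n (rankOf P.cands (P'.ballot j) y) ≤ S n 1 := by
    apply score_le_first (hS n)
    · unfold rankOf; omega
    · exact hrank_le y hy
  linarith
end

section
/- The Instant Runoff voting method satisfies positive involvement: for any profile P and any x ∈ InstantRunoff(P), if P' is obtained from P by adding one new voter whose ballot ranks x in first place, then x ∈ InstantRunoff(P'). -/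
open scoped Classical

/-- The number of voters of `P` who rank `x` first among the candidates in `Y`. -/
noncomputable def countFirst (P : Profile) (Y : Finset ℕ) (x : ℕ) : ℕ :=
  (P.voters.filter (fun i => ∀ y ∈ Y, y ≠ x → P.ballot i x y)).card

/-- `x` is a majority winner in the profile `P` restricted to the candidates in `Y`. -/
noncomputable def majWinner (P : Profile) (Y : Finset ℕ) (x : ℕ) : Prop :=
  x ∈ Y ∧ 2 * countFirst P Y x > P.voters.card

/-- The `n`-th stage of the Instant Runoff elimination process: if some remaining
candidate is a majority winner, stop; otherwise remove all remaining candidates with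
the fewest first-place votes, unless all remaining candidates are tied (in which case
stop). -/
noncomputable def irStage (P : Profile) : ℕ → Finset ℕ
  | 0 => P.cands
  | n + 1 =>
    let Y := irStage P n
    if (∃ x, majWinner P Y x) then Y
    else
      let L := Y.filter (fun x => ∀ y ∈ Y, countFirst P Y x ≤ countFirst P Y y)
      if L = Y then Y else Y \ L

/-- The Instant Runoff winners: iterate the elimination process (which stabilizes after
at most `|X(P)|` stages); if a remaining candidate is a majority winner, the majority
winner wins; otherwise (all remaining candidates were tied) all remaining candidates win. -/
noncomputable def InstantRunoff (P : Profile) : Finset ℕ :=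
  let Y := irStage P P.cands.card
  if (∃ x, majWinner P Y x) then Y.filter (fun x => majWinner P Y x) else Y

/-! ### Auxiliary lemmas -/

lemma IR_def (P : Profile) : InstantRunoff P =
    if (∃ w, majWinner P (irStage P P.cands.card) w)
    then (irStage P P.cands.card).filter (fun z => majWinner P (irStage P P.cands.card) z)
    else irStage P P.cands.card := rfl

lemma irStage_succ (P : Profile) (n : ℕ) :
    irStage P (n + 1) =
      if (∃ w, majWinner P (irStage P n) w) then irStage P n
      else if (irStage P n).filter
          (fun z => ∀ y ∈ irStage P n, countFirst P (irStage P n) z ≤ countFirst P (irStage P n) y)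
          = irStage P n
        then irStage P n
        else irStage P n \ (irStage P n).filter
          (fun z => ∀ y ∈ irStage P n, countFirst P (irStage P n) z ≤ countFirst P (irStage P n) y)
    := rfl

lemma irStage_succ_subset (P : Profile) (n : ℕ) : irStage P (n + 1) ⊆ irStage P n := by
  rw [irStage_succ]
  split
  · exact Finset.Subset.refl _
  · split
    · exact Finset.Subset.refl _
    · exact Finset.sdiff_subset

lemma irStage_mono (P : Profile) {m n : ℕ} (h : m ≤ n) : irStage P n ⊆ irStage P m := by
  refine Nat.le_induction (Finset.Subset.refl _)
    (fun k hk ih => (irStage_succ_subset P k).trans ih) n h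

lemma irStage_subset_cands (P : Profile) (n : ℕ) : irStage P n ⊆ P.cands :=
  irStage_mono P (Nat.zero_le n)

lemma irStage_const (P : Profile) (n : ℕ) (h : ∃ w, majWinner P (irStage P n) w) :
    ∀ m, n ≤ m → irStage P m = irStage P n := by
  intro m hm
  refine Nat.le_induction rfl (fun k hk ih => ?_) m hm
  rw [irStage_succ, ih, if_pos h]

lemma ballot_asymm (P : Profile) {i a b : ℕ} (hi : i ∈ P.voters)
    (h1 : P.ballot i a b) (h2 : P.ballot i b a) : False := by
  obtain ⟨_, hirr, htr, _⟩ := P.ballot_lin i hi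
  exact hirr a (htr a b a h1 h2)

lemma maj_unique (P : Profile) (Y : Finset ℕ) {a b : ℕ}
    (ha : majWinner P Y a) (hb : majWinner P Y b) : a = b := by
  by_contra hne
  obtain ⟨haY, hacount⟩ := ha
  obtain ⟨hbY, hbcount⟩ := hb
  unfold countFirst at hacount hbcount
  have hdisj : Disjoint (P.voters.filter (fun i => ∀ y ∈ Y, y ≠ a → P.ballot i a y))
      (P.voters.filter (fun i => ∀ y ∈ Y, y ≠ b → P.ballot i b y)) := by
    rw [Finset.disjoint_left]
    intro i hia hib
    obtain ⟨hiv, hpa⟩ := Finset.mem_filter.mp hia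
    obtain ⟨_, hpb⟩ := Finset.mem_filter.mp hib
    exact ballot_asymm P hiv (hpa b hbY (Ne.symm hne)) (hpb a haY hne)
  have hle : (P.voters.filter (fun i => ∀ y ∈ Y, y ≠ a → P.ballot i a y)).card
      + (P.voters.filter (fun i => ∀ y ∈ Y, y ≠ b → P.ballot i b y)).card ≤ P.voters.card := by
    rw [← Finset.card_union_of_disjoint hdisj]
    exact Finset.card_le_card
      (Finset.union_subset (Finset.filter_subset _ _) (Finset.filter_subset _ _))
  omega

lemma mem_irStage_of_mem_IR (P : Profile) {x : ℕ} (hx : x ∈ InstantRunoff P) :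
    x ∈ irStage P P.cands.card := by
  rw [IR_def] at hx
  split at hx
  · exact (Finset.mem_filter.mp hx).1
  · exact hx

lemma maj_of_mem_IR (P : Profile) {n x w : ℕ} (hn : n ≤ P.cands.card)
    (hw : majWinner P (irStage P n) w) (hx : x ∈ InstantRunoff P) :
    majWinner P (irStage P n) x := by
  have hconst := irStage_const P n ⟨w, hw⟩ P.cands.card hn
  rw [IR_def, hconst, if_pos (⟨w, hw⟩ : ∃ w, majWinner P (irStage P n) w)] at hx
  exact (Finset.mem_filter.mp hx).2

lemma count_add (P P' : Profile) (j x : ℕ) (h : AddVoter P P' j x)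
    (Y : Finset ℕ) (hYC : Y ⊆ P.cands) (hxY : x ∈ Y) :
    countFirst P' Y x = countFirst P Y x + 1 ∧
      ∀ z, z ≠ x → countFirst P' Y z = countFirst P Y z := by
  obtain ⟨hc, hjv, hv, hb, hrfx, hrf⟩ := h
  have hjmem : j ∈ P'.voters := by rw [hv]; exact Finset.mem_insert_self j P.voters
  obtain ⟨hdom, hirr, htr, _⟩ := P'.ballot_lin j hjmem
  have hfilter : ∀ z : ℕ,
      P.voters.filter (fun i => ∀ y ∈ Y, y ≠ z → P'.ballot i z y) =
      P.voters.filter (fun i => ∀ y ∈ Y, y ≠ z → P.ballot i z y) := by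
    intro z
    apply Finset.filter_congr
    intro i hi
    constructor
    · intro H y hy hyz; exact (hb i hi z y).mp (H y hy hyz)
    · intro H y hy hyz; exact (hb i hi z y).mpr (H y hy hyz)
  constructor
  · have hpj : ∀ y ∈ Y, y ≠ x → P'.ballot j x y := fun y hy hyx => hrf y (hYC hy) hyx
    unfold countFirst
    rw [hv, Finset.filter_insert, if_pos hpj, hfilter x,
      Finset.card_insert_of_notMem (fun hmem => hjv (Finset.mem_of_mem_filter j hmem))]
  · intro z hz
    have hpj : ¬ (∀ y ∈ Y, y ≠ z → P'.ballot j z y) := by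
      intro H
      have h1 : P'.ballot j z x := H x hxY (Ne.symm hz)
      have hzC : z ∈ P'.cands := (hdom z x h1).1
      have h2 : P'.ballot j x z := hrf z (by rwa [← hc]) hz
      exact hirr z (htr z x z h1 h2)
    unfold countFirst
    rw [hv, Finset.filter_insert, if_neg hpj, hfilter z]

lemma countFirst_singleton (Q : Profile) (x : ℕ) :
    countFirst Q {x} x = Q.voters.card := by
  unfold countFirst
  rw [Finset.filter_true_of_mem]
  intro i _ y hy hyx
  exact absurd (Finset.mem_singleton.mp hy) hyx

lemma invariant (P P' : Profile) (j x : ℕ) (hx : x ∈ InstantRunoff P)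
    (h : AddVoter P P' j x) :
    ∀ n, n ≤ P.cands.card →
      ((irStage P n = irStage P' n ∧ x ∈ irStage P n) ∨ majWinner P' (irStage P' n) x) := by
  have hcopy := h
  obtain ⟨hc, hjv, hv, hb, hrfx, hrf⟩ := hcopy
  have hV : P'.voters.card = P.voters.card + 1 := by
    rw [hv, Finset.card_insert_of_notMem hjv]
  have hxcard : x ∈ irStage P P.cands.card := mem_irStage_of_mem_IR P hx
  intro n
  induction n with
  | zero =>
    intro _
    exact Or.inl ⟨hc.symm, irStage_mono P (Nat.zero_le _) hxcard⟩
  | succ n ih =>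
    intro hn1
    have hn : n ≤ P.cands.card := by omega
    rcases ih hn with ⟨hYY, hxY⟩ | hmaj
    · -- stages agree at n
      set Y := irStage P n with hY
      have hYC : Y ⊆ P.cands := irStage_subset_cands P n
      obtain ⟨hcx, hcz⟩ := count_add P P' j x h Y hYC hxY
      have hmono : ∀ y, countFirst P Y y ≤ countFirst P' Y y := by
        intro y
        rcases eq_or_ne y x with rfl | hy
        · rw [hcx]; omega
        · rw [hcz y hy]
      by_cases hM' : ∃ w, majWinner P' Y w
      · right
        have hmx : majWinner P' Y x := by
          obtain ⟨w, hw⟩ := hM'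
          rcases eq_or_ne w x with rfl | hne
          · exact hw
          · exfalso
            have hwP : majWinner P Y w := by
              refine ⟨hw.1, ?_⟩
              have h2 := hw.2
              rw [hcz w hne] at h2
              omega
            have hxm : majWinner P Y x := maj_of_mem_IR P hn hwP hx
            exact hne (maj_unique P Y hwP hxm)
        rw [irStage_succ, ← hYY, if_pos (⟨x, hmx⟩ : ∃ w, majWinner P' Y w)]
        exact hmx
      · -- no majority winner in P' on Y
        have hMP : ¬ ∃ w, majWinner P Y w := by
          rintro ⟨w, hw⟩
          have hxm : majWinner P Y x := maj_of_mem_IR P hn hw hx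
          refine hM' ⟨x, hxm.1, ?_⟩
          have h2 := hxm.2
          rw [hcx, hV]
          omega
        set L := Y.filter (fun z => ∀ y ∈ Y, countFirst P Y z ≤ countFirst P Y y) with hL
        by_cases hLY : L = Y
        · -- everyone tied in P; in P', x beats all others
          have hz₀ : ∃ z ∈ Y, z ≠ x := by
            by_contra hcon
            push_neg at hcon
            have hYx : Y = {x} := Finset.eq_singleton_iff_unique_mem.mpr ⟨hxY, hcon⟩
            refine hM' ⟨x, hxY, ?_⟩
            rw [hYx, countFirst_singleton, hV]
            omega
          obtain ⟨z₀, hz₀Y, hz₀x⟩ := hz₀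
          have hall : ∀ z ∈ Y, ∀ y ∈ Y, countFirst P Y z ≤ countFirst P Y y := by
            intro z hz
            exact (Finset.mem_filter.mp (hLY.symm ▸ hz)).2
          have hL' : Y.filter (fun z => ∀ y ∈ Y, countFirst P' Y z ≤ countFirst P' Y y)
              = Y.erase x := by
            ext z
            simp only [Finset.mem_filter, Finset.mem_erase]
            constructor
            · rintro ⟨hzY, hzmin⟩
              refine ⟨?_, hzY⟩
              rintro rfl
              have h1 := hzmin z₀ hz₀Y
              rw [hcx, hcz z₀ hz₀x] at h1
              have h2 := hall z₀ hz₀Y z hzY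
              omega
            · rintro ⟨hzx, hzY⟩
              refine ⟨hzY, fun y hy => ?_⟩
              rw [hcz z hzx]
              exact le_trans (hall z hzY y hy) (hmono y)
          right
          rw [irStage_succ, ← hYY, if_neg hM', hL']
          have herase : Y.erase x ≠ Y := by
            intro hcontra
            have hne := Finset.notMem_erase x Y
            rw [hcontra] at hne
            exact hne hxY
          have hsd : Y \ Y.erase x = {x} := by
            ext a
            simp only [Finset.mem_sdiff, Finset.mem_erase, Finset.mem_singleton]
            constructor
            · rintro ⟨haY, hne⟩
              by_contra hax
              exact hne ⟨hax, haY⟩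
            · rintro rfl
              exact ⟨hxY, fun hcon => hcon.1 rfl⟩
          rw [if_neg herase, hsd]
          refine ⟨Finset.mem_singleton_self x, ?_⟩
          rw [countFirst_singleton]
          omega
        · -- x is not among the minimal candidates in P
          have hxL : x ∉ L := by
            intro hxmem
            have hstep : irStage P (n + 1) = Y \ L := by
              rw [irStage_succ, ← hY, ← hL, if_neg hMP, if_neg hLY]
            have hsub : irStage P P.cands.card ⊆ irStage P (n + 1) := irStage_mono P hn1
            rw [hstep] at hsub
            exact (Finset.mem_sdiff.mp (hsub hxcard)).2 hxmem
          have hnotmin : ∃ y ∈ Y, countFirst P Y y < countFirst P Y x := by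
            by_contra hcon
            push_neg at hcon
            exact hxL (by rw [hL]; exact Finset.mem_filter.mpr ⟨hxY, hcon⟩)
          obtain ⟨y₀, hy₀Y, hy₀⟩ := hnotmin
          have hy₀x : y₀ ≠ x := by rintro rfl; omega
          have hLL' : Y.filter (fun z => ∀ y ∈ Y, countFirst P' Y z ≤ countFirst P' Y y)
              = L := by
            rw [hL]
            ext z
            simp only [Finset.mem_filter]
            constructor
            · rintro ⟨hzY, hmin⟩
              have hzx : z ≠ x := by
                rintro rfl
                have h1 := hmin y₀ hy₀Y
                rw [hcx, hcz y₀ hy₀x] at h1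
                omega
              refine ⟨hzY, fun y hy => ?_⟩
              rcases eq_or_ne y x with rfl | hyx
              · have h1 := hmin y₀ hy₀Y
                rw [hcz z hzx, hcz y₀ hy₀x] at h1
                omega
              · have h1 := hmin y hy
                rwa [hcz z hzx, hcz y hyx] at h1
            · rintro ⟨hzY, hmin⟩
              have hzx : z ≠ x := by
                rintro rfl
                exact hxL (by rw [hL]; exact Finset.mem_filter.mpr ⟨hzY, hmin⟩)
              refine ⟨hzY, fun y hy => ?_⟩
              rw [hcz z hzx]
              exact le_trans (hmin y hy) (hmono y)
          left
          constructor
          · rw [irStage_succ P n, irStage_succ P' n, ← hYY, ← hY,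
              if_neg hMP, if_neg hM', hLL', ← hL]
          · rw [irStage_succ, ← hY, ← hL, if_neg hMP, if_neg hLY]
            exact Finset.mem_sdiff.mpr ⟨hxY, hxL⟩
    · -- x is already a majority winner in P'
      right
      rw [irStage_succ, if_pos (⟨x, hmaj⟩ : ∃ w, majWinner P' (irStage P' n) w)]
      exact hmaj

/-- Instant Runoff satisfies positive involvement. -/
theorem instantRunoff_satisfies_PI : SatisfiesPI InstantRunoff := by
  intro P P' j x hx h
  have hinv := invariant P P' j x hx h P.cands.card le_rfl
  have hcopy := h
  obtain ⟨hc, hjv, hv, hb, hrfx, hrf⟩ := hcopy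
  have hV : P'.voters.card = P.voters.card + 1 := by
    rw [hv, Finset.card_insert_of_notMem hjv]
  have hcc : P'.cands.card = P.cands.card := by rw [hc]
  rcases hinv with ⟨hYY, hxY⟩ | hmaj
  · set Y := irStage P P.cands.card with hY
    obtain ⟨hcx, hcz⟩ := count_add P P' j x h Y (irStage_subset_cands P _) hxY
    rw [IR_def P', hcc, ← hYY]
    by_cases hM' : ∃ w, majWinner P' Y w
    · rw [if_pos hM']
      have hmx : majWinner P' Y x := by
        obtain ⟨w, hw⟩ := hM'
        rcases eq_or_ne w x with rfl | hne
        · exact hw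
        · exfalso
          have hwP : majWinner P Y w := by
            refine ⟨hw.1, ?_⟩
            have h2 := hw.2
            rw [hcz w hne] at h2
            omega
          have hxm : majWinner P Y x := maj_of_mem_IR P le_rfl hwP hx
          exact hne (maj_unique P Y hwP hxm)
      exact Finset.mem_filter.mpr ⟨hmx.1, hmx⟩
    · rw [if_neg hM']
      exact hxY
  · rw [IR_def P', hcc, if_pos (⟨x, hmaj⟩ : ∃ w, majWinner P' (irStage P' P.cands.card) w)]
    exact Finset.mem_filter.mpr ⟨hmaj.1, hmaj⟩
end

section
/- The Split Cycle voting method satisfies positive involvement: for any profile P and any x ∈ SplitCycle(P), if P' is obtained from P by adding one new voter whose ballot ranks x in first place, then x ∈ SplitCycle(P'). -/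
open scoped Classical

/-- The margin of `a` over `b` in the profile `P`. -/
noncomputable def marginP (P : Profile) (a b : ℕ) : ℤ :=
  ((P.voters.filter (fun i => P.ballot i a b)).card : ℤ) -
    ((P.voters.filter (fun i => P.ballot i b a)).card : ℤ)

/-- `l` is a majority cycle in `P`: a sequence of candidates, distinct except that the
first and last entries are equal, with a positive margin along each step. -/
def IsCycle (P : Profile) (l : List ℕ) : Prop :=
  2 ≤ l.length ∧ l.head? = l.getLast? ∧ l.dropLast.Nodup ∧
  (∀ x ∈ l, x ∈ P.cands) ∧ l.Chain' (fun u v => 0 < marginP P u v)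

/-- `a` defeats `b` in `P` according to Split Cycle: the margin of `a` over `b` is
positive and greater than the strength (minimal margin along the cycle) of every
majority cycle containing `a` and `b`. -/
def SCdefeats (P : Profile) (a b : ℕ) : Prop :=
  0 < marginP P a b ∧
  ∀ l : List ℕ, IsCycle P l → a ∈ l → b ∈ l →
    ∃ p ∈ l.zip l.tail, marginP P p.1 p.2 < marginP P a b

/-- The Split Cycle winners: the candidates not defeated by any candidate. -/
noncomputable def SplitCycle (P : Profile) : Finset ℕ :=
  P.cands.filter (fun x => ¬ ∃ y ∈ P.cands, SCdefeats P y x)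

/-!
Adding a voter who ranks `x` first lowers every margin by at most one, and lowers the margin
of any `y` over `x` by exactly one. Hence if `y` defeats `x` afterwards, `y` had a positive
margin over `x` before, and a majority cycle through `y` and `x` with all margins at least
`marginP P y x`, which blocked that defeat, is still a majority cycle afterwards with all
margins at least the new margin of `y` over `x`, so it still blocks the defeat.
-/
theorem List.isChain_iff_forall_mem_zip_tail {α : Type*} (R : α → α → Prop) :
    ∀ l : List α, l.IsChain R ↔ ∀ p ∈ l.zip l.tail, R p.1 p.2
  | [] => by simp
  | [a] => by simp
  | a :: b :: t => by
    rw [List.isChain_cons_cons, isChain_iff_forall_mem_zip_tail R (b :: t)]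
    simp only [List.tail_cons, List.zip_cons_cons, List.forall_mem_cons]

lemma IsLinOn.asymm {X : Finset ℕ} {r : ℕ → ℕ → Prop} (hr : IsLinOn X r) {a b : ℕ}
    (hab : r a b) : ¬ r b a :=
  fun hba => hr.2.1 a (hr.2.2.1 a b a hab hba)

lemma marginP_self (P : Profile) (a : ℕ) : marginP P a a = 0 := by
  simp [marginP]

lemma IsCycle.of_cands_eq {P P' : Profile} {l : List ℕ} (hl : IsCycle P l)
    (hc : P'.cands = P.cands) (hpos : ∀ p ∈ l.zip l.tail, 0 < marginP P' p.1 p.2) :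
    IsCycle P' l := by
  obtain ⟨hlen, hends, hnodup, hcands, -⟩ := hl
  refine ⟨hlen, hends, hnodup, fun z hz => hc ▸ hcands z hz, ?_⟩
  exact (List.isChain_iff_forall_mem_zip_tail _ l).2 hpos

namespace AddVoter

variable {P P' : Profile} {j x : ℕ}

lemma card_filter_ballot (h : AddVoter P P' j x) (a b : ℕ) :
    ((P'.voters.filter (fun i => P'.ballot i a b)).card : ℤ) =
      (P.voters.filter (fun i => P.ballot i a b)).card + if P'.ballot j a b then 1 else 0 := by
  obtain ⟨-, hj, hvoters, hballot, -⟩ := h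
  have hold : P.voters.filter (fun i => P'.ballot i a b) =
      P.voters.filter (fun i => P.ballot i a b) :=
    Finset.filter_congr fun i hi => hballot i hi a b
  rw [hvoters, Finset.filter_insert, ← hold]
  split_ifs
  · rw [Finset.card_insert_of_notMem fun hm => hj (Finset.mem_of_mem_filter _ hm)]
    push_cast
    ring
  · simp

lemma marginP_eq (h : AddVoter P P' j x) (a b : ℕ) :
    marginP P' a b = marginP P a b +
      ((if P'.ballot j a b then 1 else 0) - if P'.ballot j b a then 1 else 0) := by
  unfold marginP
  rw [h.card_filter_ballot a b, h.card_filter_ballot b a]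
  ring

lemma marginP_sub_one_le (h : AddVoter P P' j x) (a b : ℕ) :
    marginP P a b - 1 ≤ marginP P' a b := by
  rw [h.marginP_eq a b]
  split_ifs <;> omega

lemma marginP_over_first_eq (h : AddVoter P P' j x) {y : ℕ} (hy : y ∈ P.cands) (hyx : y ≠ x) :
    marginP P' y x = marginP P y x - 1 := by
  rw [h.marginP_eq y x]
  obtain ⟨-, -, hvoters, -, -, hfirst⟩ := h
  have hj : j ∈ P'.voters := hvoters ▸ Finset.mem_insert_self j P.voters
  have hxy : P'.ballot j x y := hfirst y hy hyx
  have hnyx : ¬ P'.ballot j y x := (P'.ballot_lin j hj).asymm hxy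
  rw [if_neg hnyx, if_pos hxy]
  ring

lemma scDefeats_of_scDefeats (h : AddVoter P P' j x) {y : ℕ} (hy : y ∈ P.cands)
    (hdef : SCdefeats P' y x) : SCdefeats P y x := by
  obtain ⟨hpos', hcycles'⟩ := hdef
  have hyx : y ≠ x := by
    rintro rfl
    exact (marginP_self P' y ▸ hpos').false
  have hdrop := h.marginP_over_first_eq hy hyx
  refine ⟨by omega, fun l hl hyl hxl => ?_⟩
  by_contra! hstrong
  have hstep : ∀ p ∈ l.zip l.tail, marginP P' y x ≤ marginP P' p.1 p.2 := fun p hp => by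
    have := h.marginP_sub_one_le p.1 p.2
    have := hstrong p hp
    omega
  have hl' : IsCycle P' l :=
    hl.of_cands_eq h.1 fun p hp => hpos'.trans_le (hstep p hp)
  obtain ⟨p, hp, hlt⟩ := hcycles' l hl' hyl hxl
  exact (hstep p hp).not_gt hlt

end AddVoter

/-- Split Cycle satisfies positive involvement. -/
theorem splitCycle_satisfies_PI : SatisfiesPI SplitCycle := by
  intro P P' j x hx h
  simp only [SplitCycle, Finset.mem_filter, h.1] at hx ⊢
  exact ⟨hx.1, fun ⟨y, hy, hdef⟩ => hx.2 ⟨y, hy, h.scDefeats_of_scDefeats hy hdef⟩⟩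
end

section
/- The Beat Path voting method violates positive involvement: there exists a profile P, a candidate x ∈ BeatPath(P), and a profile P' obtained from P by adding one new voter whose ballot ranks x in first place, such that x ∉ BeatPath(P'). (A witness: an 11-voter profile on {a,b,c,d} whose margin graph has edges a→b with margin 1, a→d with margin 1, b→d with margin 3, c→b with margin 3, c→a with margin 1, d→c with margin 3, in which all of a,b,c,d are Beat Path winners; adding a voter with ballot bacd yields BeatPath winner set {a}, so b loses.) -/
open scoped Classical

/-- `l` is a path from `a` to `b` in `P`: a sequence of distinct candidates starting at
`a` and ending at `b` with a positive margin along each step. -/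
def IsPath (P : Profile) (a b : ℕ) (l : List ℕ) : Prop :=
  l.head? = some a ∧ l.getLast? = some b ∧ l.Nodup ∧
  (∀ x ∈ l, x ∈ P.cands) ∧ l.Chain' (fun u v => 0 < marginP P u v)

/-- The strength of a path: the minimal margin along its steps. -/
noncomputable def pathStrength (P : Profile) (l : List ℕ) : WithTop ℤ :=
  ((l.zip l.tail).map (fun p => marginP P p.1 p.2)).minimum

/-- `a` defeats `b` according to Beat Path: the strength of the strongest path from `a`
to `b` exceeds the strength of the strongest path from `b` to `a`, i.e., there is a path
from `a` to `b` stronger than every path from `b` to `a`. -/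
def bpDefeats (P : Profile) (a b : ℕ) : Prop :=
  ∃ p : List ℕ, IsPath P a b p ∧
    ∀ q : List ℕ, IsPath P b a q → pathStrength P q < pathStrength P p

/-- The Beat Path winners: the undefeated candidates. -/
noncomputable def BeatPath (P : Profile) : Finset ℕ :=
  P.cands.filter (fun x => ¬ ∃ y ∈ P.cands, bpDefeats P y x)

/-! In the 11-voter profile every rival of `b` is held off by a path from `b` back to it that is
as strong as the rival's largest margin: `b → d → c → a` has strength 1, the largest margin of `a`,
and `b → d → c`, `b → d` have strength 3, the largest margins of `c` and `d`. The only positive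
margin into `a` is `c → a` of size 1, which the new ballot `b a c d` cancels; afterwards no path
reaches `a`, while `a → d → c → b` is a path, so `a` defeats `b`. -/

namespace List

theorem exists_eq_cons_cons_of_head?_of_getLast? {α : Type*} {l : List α} {a b : α}
    (ha : l.head? = some a) (hb : l.getLast? = some b) (hab : a ≠ b) :
    ∃ z rest, l = a :: z :: rest := by
  match l, ha, hb with
  | [_], ha, hb =>
    simp only [head?_cons, getLast?_singleton, Option.some.injEq] at ha hb
    exact absurd (ha.symm.trans hb) hab
  | _ :: z :: rest, ha, _ =>
    simp only [head?_cons, Option.some.injEq] at ha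
    exact ⟨z, rest, ha ▸ rfl⟩

end List

section BeatPath

theorem pathStrength_cons_cons_le (P : Profile) (x y : ℕ) (rest : List ℕ) :
    pathStrength P (x :: y :: rest) ≤ (marginP P x y : WithTop ℤ) :=
  List.minimum_le_of_mem' (by simp)

theorem IsPath.exists_eq_cons_cons {P : Profile} {a b : ℕ} {l : List ℕ}
    (h : IsPath P a b l) (hab : a ≠ b) :
    ∃ z ∈ P.cands, ∃ rest, l = a :: z :: rest := by
  obtain ⟨z, rest, rfl⟩ := List.exists_eq_cons_cons_of_head?_of_getLast? h.1 h.2.1 hab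
  exact ⟨z, h.2.2.2.1 z (by simp), rest, rfl⟩

theorem IsPath.exists_marginP_pos_last {P : Profile} {a b : ℕ} {l : List ℕ}
    (h : IsPath P a b l) (hab : a ≠ b) :
    ∃ w ∈ P.cands, 0 < marginP P w b := by
  obtain ⟨hhead, hlast, -, hcands, hchain⟩ := h
  obtain ⟨w, rest, hrev⟩ := List.exists_eq_cons_cons_of_head?_of_getLast?
    (l := l.reverse) (by rwa [List.head?_reverse]) (by rwa [List.getLast?_reverse]) hab.symm
  have hrchain := List.isChain_reverse.mpr hchain
  rw [hrev] at hrchain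
  exact ⟨w, hcands w (List.mem_reverse.mp (by simp [hrev])), (List.isChain_cons_cons.mp hrchain).1⟩

theorem not_bpDefeats_of_forall_marginP_le {P : Profile} {y b : ℕ} (hyb : y ≠ b) {s : ℤ}
    (hbound : ∀ z ∈ P.cands, marginP P y z ≤ s) {q : List ℕ} (hq : IsPath P b y q)
    (hqs : (s : WithTop ℤ) ≤ pathStrength P q) :
    ¬ bpDefeats P y b := by
  rintro ⟨p, hp, hstronger⟩
  obtain ⟨z, hz, rest, rfl⟩ := hp.exists_eq_cons_cons hyb
  have hps : pathStrength P (y :: z :: rest) ≤ (s : WithTop ℤ) :=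
    (pathStrength_cons_cons_le P y z rest).trans (by exact_mod_cast hbound z hz)
  exact (hqs.trans_lt ((hstronger q hq).trans_le hps)).false

theorem bpDefeats_of_forall_marginP_nonpos {P : Profile} {a b : ℕ} (hab : a ≠ b)
    {p : List ℕ} (hp : IsPath P a b p) (hnonpos : ∀ u ∈ P.cands, marginP P u a ≤ 0) :
    bpDefeats P a b := by
  refine ⟨p, hp, fun q hq => ?_⟩
  obtain ⟨w, hw, hpos⟩ := hq.exists_marginP_pos_last hab.symm
  exact absurd (hnonpos w hw) hpos.not_ge

theorem mem_beatPath_of_forall_not_bpDefeats {P : Profile} {x : ℕ} (hx : x ∈ P.cands)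
    (h : ∀ y ∈ P.cands, y ≠ x → ¬ bpDefeats P y x) : x ∈ BeatPath P := by
  refine Finset.mem_filter.mpr ⟨hx, fun ⟨y, hy, hyx⟩ => ?_⟩
  rcases eq_or_ne y x with rfl | hne
  · obtain ⟨p, hp, hstronger⟩ := hyx
    exact (hstronger p hp).false
  · exact h y hy hne hyx

theorem notMem_beatPath_of_bpDefeats {P : Profile} {x y : ℕ} (hy : y ∈ P.cands)
    (h : bpDefeats P y x) : x ∉ BeatPath P :=
  fun hx => (Finset.mem_filter.mp hx).2 ⟨y, hy, h⟩

end BeatPath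

section Rankings

/-- The ballot read off a ranking listed from best to worst. -/
def RanksAbove (l : List ℕ) (x y : ℕ) : Prop :=
  x ∈ l ∧ y ∈ l ∧ l.idxOf x < l.idxOf y

instance (l : List ℕ) : DecidableRel (RanksAbove l) :=
  fun _ _ => inferInstanceAs (Decidable (_ ∧ _ ∧ _))

theorem isLinOn_ranksAbove (l : List ℕ) : IsLinOn l.toFinset (RanksAbove l) := by
  refine ⟨fun a b h => ⟨List.mem_toFinset.mpr h.1, List.mem_toFinset.mpr h.2.1⟩,
    fun a h => lt_irrefl _ h.2.2, fun a b c h₁ h₂ => ⟨h₁.1, h₂.2.1, h₁.2.2.trans h₂.2.2⟩,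
    fun a ha b hb hab => ?_⟩
  rw [List.mem_toFinset] at ha hb
  rcases lt_or_gt_of_ne (mt (List.idxOf_inj ha).mp hab) with h | h
  · exact Or.inl ⟨ha, hb, h⟩
  · exact Or.inr ⟨hb, ha, h⟩

def Profile.ofRankings (X : Finset ℕ) (hX : X.Nonempty) (r : ℕ → List ℕ) (n : ℕ) (hn : 0 < n)
    (hr : ∀ i < n, (r i).toFinset = X) : Profile where
  voters := Finset.range n
  cands := X
  voters_nonempty := Finset.nonempty_range_iff.mpr hn.ne'
  cands_nonempty := hX
  ballot i := RanksAbove (r i)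
  ballot_lin i hi := hr i (Finset.mem_range.mp hi) ▸ isLinOn_ranksAbove (r i)

variable {X : Finset ℕ} {hX : X.Nonempty} {r : ℕ → List ℕ}

theorem marginP_ofRankings {n : ℕ} {hn : 0 < n} {hr : ∀ i < n, (r i).toFinset = X} (a b : ℕ) :
    marginP (Profile.ofRankings X hX r n hn hr) a b =
      (((Finset.range n).filter (fun i => RanksAbove (r i) a b)).card : ℤ) -
        ((Finset.range n).filter (fun i => RanksAbove (r i) b a)).card := by
  simp only [marginP, Profile.ofRankings]
  congr

theorem addVoter_ofRankings {n x : ℕ} (hn : 0 < n) (hr : ∀ i < n + 1, (r i).toFinset = X)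
    (hx : RanksFirst X (RanksAbove (r n)) x) :
    AddVoter (Profile.ofRankings X hX r n hn fun i hi => hr i (by omega))
      (Profile.ofRankings X hX r (n + 1) n.succ_pos hr) n x :=
  ⟨rfl, Finset.notMem_range_self, Finset.range_add_one, fun _ _ _ _ => Iff.rfl, hx⟩

end Rankings

section Witness

/-! Candidates `a, b, c, d` are `0, 1, 2, 3`; voter `11` is the one who joins. -/

def rankings : List (List ℕ) :=
  [[2, 1, 0, 3], [1, 3, 2, 0], [0, 3, 2, 1], [1, 3, 2, 0], [0, 3, 2, 1], [2, 1, 3, 0],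
   [3, 0, 2, 1], [1, 3, 2, 0], [0, 1, 2, 3], [2, 0, 1, 3], [0, 3, 2, 1], [1, 0, 2, 3]]

theorem toFinset_rankings_getD : ∀ i < 12, (rankings.getD i []).toFinset = Finset.range 4 := by
  decide

def profileBefore : Profile :=
  .ofRankings (Finset.range 4) Finset.nonempty_range_add_one (rankings.getD · []) 11
    (by norm_num) fun i hi => toFinset_rankings_getD i (by omega)

def profileAfter : Profile :=
  .ofRankings (Finset.range 4) Finset.nonempty_range_add_one (rankings.getD · []) 12
    (by norm_num) toFinset_rankings_getD

theorem addVoter_profileBefore_profileAfter : AddVoter profileBefore profileAfter 11 1 :=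
  addVoter_ofRankings (by norm_num) toFinset_rankings_getD
    ⟨by decide, by unfold RanksAbove; decide⟩

theorem one_mem_beatPath_profileBefore : 1 ∈ BeatPath profileBefore := by
  refine mem_beatPath_of_forall_not_bpDefeats (by decide) fun y hy hy1 => ?_
  have hrival : y = 0 ∨ y = 2 ∨ y = 3 := by
    simp only [profileBefore, Profile.ofRankings, Finset.mem_range] at hy
    omega
  rcases hrival with rfl | rfl | rfl <;> [
    refine not_bpDefeats_of_forall_marginP_le (s := 1) (q := [1, 3, 2, 0]) hy1 ?_ ?_ ?_;
    refine not_bpDefeats_of_forall_marginP_le (s := 3) (q := [1, 3, 2]) hy1 ?_ ?_ ?_;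
    refine not_bpDefeats_of_forall_marginP_le (s := 3) (q := [1, 3]) hy1 ?_ ?_ ?_] <;>
  · simp only [IsPath, pathStrength, List.Chain', List.isChain_cons_cons, List.isChain_singleton,
      and_true, profileBefore, marginP_ofRankings]
    decide

theorem one_notMem_beatPath_profileAfter : 1 ∉ BeatPath profileAfter := by
  refine notMem_beatPath_of_bpDefeats (y := 0) (by decide)
    (bpDefeats_of_forall_marginP_nonpos (p := [0, 3, 2, 1]) (by decide) ?_ ?_)
  all_goals
    simp only [IsPath, List.Chain', List.isChain_cons_cons, List.isChain_singleton, and_true,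
      profileAfter, marginP_ofRankings]
    decide

end Witness

theorem beatPath_violates_PI :
    ∃ (P P' : Profile) (j x : ℕ),
      x ∈ BeatPath P ∧ AddVoter P P' j x ∧ x ∉ BeatPath P' :=
  ⟨profileBefore, profileAfter, 11, 1, one_mem_beatPath_profileBefore,
    addVoter_profileBefore_profileAfter, one_notMem_beatPath_profileAfter⟩
end

section
/- The Fishburn Uncovered Set voting method violates positive involvement: there exists a profile P, a candidate x ∈ UC_Fishburn(P), and a profile P' obtained from P by adding one new voter whose ballot ranks x in first place, such that x ∉ UC_Fishburn(P'). (A witness: P is the 5-voter profile on candidates {a,b,c} with ballots abc, abc, bca, cab, cab, in which UC_Fishburn(P) = {a,b,c}; adding a voter with ballot bac yields UC_Fishburn(P') = {a}, so b loses.) -/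
open scoped Classical

/-- `a` Fishburn covers `b` in `P`. -/
def FishburnCovers (P : Profile) (a b : ℕ) : Prop :=
  (∀ c ∈ P.cands, 0 < marginP P c a → 0 < marginP P c b) ∧
  ∃ c ∈ P.cands, 0 < marginP P c b ∧ marginP P c a ≤ 0

/-- The Fishburn Uncovered Set: the candidates not Fishburn covered by any candidate. -/
noncomputable def UCFishburn (P : Profile) : Finset ℕ :=
  P.cands.filter (fun x => ¬ ∃ y ∈ P.cands, FishburnCovers P y x)


/-- Rank of candidate `c` for voter `i` (lower = better). Ballots:
voters 0,1: a b c; voter 2: b c a; voters 3,4: c a b; voter 5: b a c. -/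
def rkAux (i c : ℕ) : ℕ :=
  (([[0,1,2],[0,1,2],[2,0,1],[1,2,0],[1,2,0],[1,0,2]].getD i []).getD c 0)

def balAux (i a b : ℕ) : Prop := a < 3 ∧ b < 3 ∧ rkAux i a < rkAux i b

instance (i a b : ℕ) : Decidable (balAux i a b) :=
  inferInstanceAs (Decidable (_ ∧ _ ∧ _))

lemma balAux_lin (i : ℕ) (hi : i < 6) : IsLinOn (Finset.range 3) (balAux i) := by
  refine ⟨fun a b h => ?_, fun a h => ?_, fun a b c h1 h2 => ?_, fun a ha b hb hne => ?_⟩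
  · exact ⟨Finset.mem_range.2 h.1, Finset.mem_range.2 h.2.1⟩
  · exact lt_irrefl _ h.2.2
  · exact ⟨h1.1, h2.2.1, lt_trans h1.2.2 h2.2.2⟩
  · simp only [Finset.mem_range] at ha hb
    interval_cases i <;> interval_cases a <;> interval_cases b <;> simp_all <;> decide

noncomputable def Paux : Profile where
  voters := Finset.range 5
  cands := Finset.range 3
  voters_nonempty := by decide
  cands_nonempty := by decide
  ballot := balAux
  ballot_lin := fun i hi => balAux_lin i (by have := Finset.mem_range.1 hi; omega)

noncomputable def Paux' : Profile where
  voters := Finset.range 6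
  cands := Finset.range 3
  voters_nonempty := by decide
  cands_nonempty := by decide
  ballot := balAux
  ballot_lin := fun i hi => balAux_lin i (Finset.mem_range.1 hi)

theorem ucFishburn_violates_PI :
    ∃ (P P' : Profile) (j x : ℕ),
      x ∈ UCFishburn P ∧ AddVoter P P' j x ∧ x ∉ UCFishburn P' := by
  refine ⟨Paux, Paux', 5, 1, ?_, ?_, ?_⟩
  · -- 1 ∈ UCFishburn Paux
    have m01 : marginP Paux 0 1 = 3 := by
      unfold marginP
      rw [show Paux.voters = ({0,1,2,3,4} : Finset ℕ) from rfl]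
      simp [Finset.filter_insert, Finset.filter_singleton, Paux, balAux, rkAux]
    have m12 : marginP Paux 1 2 = 1 := by
      unfold marginP
      rw [show Paux.voters = ({0,1,2,3,4} : Finset ℕ) from rfl]
      simp [Finset.filter_insert, Finset.filter_singleton, Paux, balAux, rkAux]
    have m20 : marginP Paux 2 0 = 1 := by
      unfold marginP
      rw [show Paux.voters = ({0,1,2,3,4} : Finset ℕ) from rfl]
      simp [Finset.filter_insert, Finset.filter_singleton, Paux, balAux, rkAux]
    have m21 : marginP Paux 2 1 = -1 := by
      unfold marginP
      rw [show Paux.voters = ({0,1,2,3,4} : Finset ℕ) from rfl]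
      simp [Finset.filter_insert, Finset.filter_singleton, Paux, balAux, rkAux]
    have m11 : marginP Paux 1 1 = 0 := by
      unfold marginP
      rw [show Paux.voters = ({0,1,2,3,4} : Finset ℕ) from rfl]
      simp [Finset.filter_insert, Finset.filter_singleton, Paux, balAux, rkAux]
    simp only [UCFishburn, Finset.mem_filter]
    refine ⟨by decide, ?_⟩
    rintro ⟨y, hy, hcov⟩
    have hy3 : y < 3 := Finset.mem_range.1 (by exact hy)
    interval_cases y
    · have := hcov.1 2 (by decide) (by rw [m20]; norm_num)
      rw [m21] at this; omega
    · obtain ⟨c, _, h1, h2⟩ := hcov.2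
      omega
    · have := hcov.1 1 (by decide) (by rw [m12]; norm_num)
      rw [m11] at this; omega
  · -- AddVoter
    refine ⟨rfl, by decide, by decide, fun i hi a b => Iff.rfl, by decide, ?_⟩
    intro y hy hne
    have hy3 : y < 3 := Finset.mem_range.1 (by exact hy)
    interval_cases y
    · show balAux 5 1 0; decide
    · exact absurd rfl hne
    · show balAux 5 1 2; decide
  · -- 1 ∉ UCFishburn Paux'
    have m01 : marginP Paux' 0 1 = 2 := by
      unfold marginP
      rw [show Paux'.voters = ({0,1,2,3,4,5} : Finset ℕ) from rfl]
      simp [Finset.filter_insert, Finset.filter_singleton, Paux', balAux, rkAux]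
    have m00 : marginP Paux' 0 0 = 0 := by
      unfold marginP
      rw [show Paux'.voters = ({0,1,2,3,4,5} : Finset ℕ) from rfl]
      simp [Finset.filter_insert, Finset.filter_singleton, Paux', balAux, rkAux]
    have m10 : marginP Paux' 1 0 = -2 := by
      unfold marginP
      rw [show Paux'.voters = ({0,1,2,3,4,5} : Finset ℕ) from rfl]
      simp [Finset.filter_insert, Finset.filter_singleton, Paux', balAux, rkAux]
    have m20 : marginP Paux' 2 0 = 0 := by
      unfold marginP
      rw [show Paux'.voters = ({0,1,2,3,4,5} : Finset ℕ) from rfl]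
      simp [Finset.filter_insert, Finset.filter_singleton, Paux', balAux, rkAux]
    simp only [UCFishburn, Finset.mem_filter, not_and, not_not]
    intro _
    refine ⟨0, by decide, ?_, ⟨0, by decide, by rw [m01]; norm_num, by rw [m00]⟩⟩
    intro c hc hpos
    have hc3 : c < 3 := Finset.mem_range.1 (by exact hc)
    interval_cases c
    · rw [m00] at hpos; omega
    · rw [m10] at hpos; omega
    · rw [m20] at hpos; omega
end
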